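/- With α_t = (H+1)/(H+t) and α_t^i = α_i ∏_{j=i+1}^t (1 - α_j), for every integer t ≥ 1 it holds that 1/√t ≤ Σ_{i=1}^t α_t^i/√i ≤ 2/√t. -/

import Mathlib

open Real Finset

/-- Learning rate `α_t = (H+1)/(H+t)`. -/
noncomputable def lr (H t : ℕ) : ℝ := (H + 1) / (H + t)

/-- Weight `α_t^i = α_i ∏_{j=i+1}^t (1 - α_j)`. -/
noncomputable def lrWeight (H i t : ℕ) : ℝ :=
  lr H i * ∏ j ∈ Finset.Icc (i + 1) t, (1 - lr H j)

/-!
Writing `S_t = ∑ i ≤ t, α_t^i x_i`, the weights satisfy the recursion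
`S_{t+1} = α_{t+1} x_{t+1} + (1 - α_{t+1}) S_t` with `α_1 = 1`. Hence the weights sum to one,
which gives the lower bound since `1/√i ≥ 1/√t`, and the upper bound follows by induction
from `α_{t+1}/√(t+1) + (1 - α_{t+1}) · 2/√t ≤ 2/√(t+1)`, which reduces to
`2√(t(t+1)) ≤ 2t + 1 + H`.
-/

lemma sqrt_mul_sqrt_add_one_le {t : ℝ} (ht : 0 ≤ t) : √t * √(t + 1) ≤ t + 1 / 2 := by
  nlinarith [sq_nonneg (√t - √(t + 1)), sq_sqrt ht, sq_sqrt (by linarith : 0 ≤ t + 1)]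

section LearningRate

variable (H : ℕ)

lemma lr_one : lr H 1 = 1 := by
  unfold lr
  rw [Nat.cast_one, div_self (by positivity)]

lemma lr_nonneg (t : ℕ) : 0 ≤ lr H t := by
  unfold lr; positivity

lemma lr_le_one {t : ℕ} (ht : 1 ≤ t) : lr H t ≤ 1 := by
  unfold lr
  rw [div_le_one (by positivity)]
  have : (1 : ℝ) ≤ t := by exact_mod_cast ht
  linarith

lemma one_sub_lr_succ (t : ℕ) : 1 - lr H (t + 1) = t / (H + t + 1) := by
  unfold lr
  push_cast
  field_simp
  ring

lemma lrWeight_nonneg (i t : ℕ) : 0 ≤ lrWeight H i t :=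
  mul_nonneg (lr_nonneg H i) <| prod_nonneg fun j hj =>
    sub_nonneg.mpr <| lr_le_one H (by linarith [(mem_Icc.mp hj).1])

lemma lrWeight_self (t : ℕ) : lrWeight H t t = lr H t := by
  rw [lrWeight, Icc_eq_empty (by omega), prod_empty, mul_one]

lemma lrWeight_succ {i t : ℕ} (hi : i ≤ t) :
    lrWeight H i (t + 1) = lrWeight H i t * (1 - lr H (t + 1)) := by
  rw [lrWeight, lrWeight, prod_Icc_succ_top (by omega), mul_assoc]

lemma sum_lrWeight_mul_succ (x : ℕ → ℝ) (t : ℕ) :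
    ∑ i ∈ Icc 1 (t + 1), lrWeight H i (t + 1) * x i =
      lr H (t + 1) * x (t + 1) + (1 - lr H (t + 1)) * ∑ i ∈ Icc 1 t, lrWeight H i t * x i := by
  rw [sum_Icc_succ_top (by omega), lrWeight_self, mul_sum, add_comm]
  congr 1
  refine sum_congr rfl fun i hi => ?_
  rw [lrWeight_succ H (mem_Icc.mp hi).2]
  ring

lemma sum_lrWeight {t : ℕ} (ht : 1 ≤ t) : ∑ i ∈ Icc 1 t, lrWeight H i t = 1 := by
  induction t, ht using Nat.le_induction with
  | base => simp [lrWeight_self, lr_one]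
  | succ t _ ih =>
    simpa [ih] using sum_lrWeight_mul_succ H (fun _ => 1) t

lemma lr_div_sqrt_add_le {t : ℕ} (ht : 1 ≤ t) :
    lr H (t + 1) / √(t + 1) + (1 - lr H (t + 1)) * (2 / √t) ≤ 2 / √(t + 1) := by
  have hs : 0 < √(t : ℝ) := sqrt_pos.mpr (by exact_mod_cast ht)
  calc lr H (t + 1) / √(t + 1) + (1 - lr H (t + 1)) * (2 / √t)
      = (H + 1 + 2 * (√t * √(t + 1))) / ((H + t + 1) * √(t + 1)) := by
        rw [one_sub_lr_succ, lr]
        push_cast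
        field_simp
        linear_combination
          (-2 * √((t : ℝ) + 1) * (H + t + 1)) * sq_sqrt (Nat.cast_nonneg (α := ℝ) t)
    _ ≤ 2 * (H + t + 1) / ((H + t + 1) * √(t + 1)) := by
        gcongr
        linarith [sqrt_mul_sqrt_add_one_le (Nat.cast_nonneg (α := ℝ) t)]
    _ = 2 / √(t + 1) := by field_simp

lemma inv_sqrt_le_sum_lrWeight_div_sqrt {t : ℕ} (ht : 1 ≤ t) :
    1 / √t ≤ ∑ i ∈ Icc 1 t, lrWeight H i t / √i :=
  calc 1 / √t = ∑ i ∈ Icc 1 t, lrWeight H i t / √t := by rw [← sum_div, sum_lrWeight H ht]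
    _ ≤ ∑ i ∈ Icc 1 t, lrWeight H i t / √i := by
      refine sum_le_sum fun i hi => ?_
      obtain ⟨hi1, hit⟩ := mem_Icc.mp hi
      exact div_le_div_of_nonneg_left (lrWeight_nonneg H i t)
        (sqrt_pos.mpr (by exact_mod_cast hi1)) (sqrt_le_sqrt (by exact_mod_cast hit))

lemma sum_lrWeight_div_sqrt_le {t : ℕ} (ht : 1 ≤ t) :
    ∑ i ∈ Icc 1 t, lrWeight H i t / √i ≤ 2 / √t := by
  induction t, ht using Nat.le_induction with
  | base => norm_num [lrWeight_self, lr_one]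
  | succ t ht ih =>
    have hrec := sum_lrWeight_mul_succ H (fun i => 1 / √(i : ℝ)) t
    simp only [mul_one_div] at hrec
    push_cast at hrec ⊢
    calc _ = lr H (t + 1) / √(t + 1) +
            (1 - lr H (t + 1)) * ∑ i ∈ Icc 1 t, lrWeight H i t / √i := hrec
      _ ≤ lr H (t + 1) / √(t + 1) + (1 - lr H (t + 1)) * (2 / √t) := by
          gcongr
          exact sub_nonneg.mpr (lr_le_one H (by omega))
      _ ≤ 2 / √(t + 1) := lr_div_sqrt_add_le H ht

end LearningRate

theorem lrWeight_sum_inv_sqrt_general (H : ℕ) (t : ℕ) :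
    1 / Real.sqrt t ≤ ∑ i ∈ Finset.Icc 1 t, lrWeight H i t / Real.sqrt i ∧
      ∑ i ∈ Finset.Icc 1 t, lrWeight H i t / Real.sqrt i ≤ 2 / Real.sqrt t := by
  rcases Nat.eq_zero_or_pos t with rfl | ht
  · simp -- the sum is empty and `1 / √0 = 0`
  · exact ⟨inv_sqrt_le_sum_lrWeight_div_sqrt H ht, sum_lrWeight_div_sqrt_le H ht⟩

theorem lrWeight_sum_inv_sqrt (H : ℕ) (hH : 1 ≤ H) (t : ℕ) (ht : 1 ≤ t) :
    1 / Real.sqrt t ≤ ∑ i ∈ Finset.Icc 1 t, lrWeight H i t / Real.sqrt i ∧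
      ∑ i ∈ Finset.Icc 1 t, lrWeight H i t / Real.sqrt i ≤ 2 / Real.sqrt t :=
  lrWeight_sum_inv_sqrt_general H t
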